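/- Set f(z) := σ_R(2σ_R(z) − 4σ_R(z−1/2)), and let g : [0,1] → [0,1] satisfy g(z) = g(1−z) for all z ∈ [0,1]. Define h := g ∘ f^k. Then for every real x ∈ [0, 2^{−k}] and every integer i ∈ {0, ..., 2^k − 1} with x + i·2^{−k} ∈ [0,1], one has h(x + i·2^{−k}) = g(x·2^k); that is, h consists of 2^k horizontally compressed repetitions of g on [0,1]. -/
import Mathlib


open MeasureTheory
open scoped ENNReal

noncomputable section

/-- The ReLU. -/
def relu (z : ℝ) : ℝ := max 0 z

/-- The ReLU triangle map `f(z) = σ_R(2σ_R(z) − 4σ_R(z − 1/2))`. -/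
def triangleF (z : ℝ) : ℝ := relu (2 * relu z - 4 * relu (z - 1/2))

lemma tent_low {y : ℝ} (h0 : 0 ≤ y) (h1 : y ≤ 1/2) : triangleF y = 2 * y := by
  unfold triangleF relu
  rw [max_eq_right h0, max_eq_left (by linarith : y - 1/2 ≤ 0),
    show 2 * y - 4 * 0 = 2 * y by ring]
  exact max_eq_right (by linarith)

lemma tent_high {y : ℝ} (h0 : 1/2 ≤ y) (h1 : y ≤ 1) : triangleF y = 2 - 2 * y := by
  unfold triangleF relu
  rw [max_eq_right (by linarith : (0:ℝ) ≤ y),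
    max_eq_right (by linarith : (0:ℝ) ≤ y - 1/2),
    show 2 * y - 4 * (y - 1/2) = 2 - 2 * y by ring]
  exact max_eq_right (by linarith)

lemma tent_key : ∀ (k : ℕ) (x : ℝ), 0 ≤ x → x ≤ ((2:ℝ)^k)⁻¹ → ∀ i : ℕ, i ≤ 2^k - 1 →
    triangleF^[k] (x + (i:ℝ) * ((2:ℝ)^k)⁻¹) =
      if Even i then x * 2^k else 1 - x * 2^k := by
  intro k
  induction k with
  | zero =>
    intro x hx0 hx1 i hi
    interval_cases i
    simp
  | succ k ih =>
    intro x hx0 hx1 i hi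
    have h2k : (0:ℝ) < 2^k := by positivity
    have hps : ((2:ℝ)^(k+1))⁻¹ * 2 = ((2:ℝ)^k)⁻¹ := by
      rw [pow_succ]; field_simp
    have h2x : 2 * x ≤ ((2:ℝ)^k)⁻¹ := by
      rw [← hps]; linarith
    rw [Function.iterate_succ_apply]
    by_cases hcase : i < 2^k
    · -- left half
      have hicast : (i:ℝ) + 1 ≤ 2^k := by exact_mod_cast hcase
      have hy0 : 0 ≤ x + (i:ℝ) * ((2:ℝ)^(k+1))⁻¹ := by positivity
      have hyle : x + (i:ℝ) * ((2:ℝ)^(k+1))⁻¹ ≤ 1/2 := by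
        have h1 : ((2:ℝ)^k) * ((2:ℝ)^(k+1))⁻¹ = 1/2 := by
          rw [pow_succ]; field_simp
        have ht : (0:ℝ) < ((2:ℝ)^(k+1))⁻¹ := by positivity
        nlinarith
      rw [tent_low hy0 hyle,
        show 2 * (x + (i:ℝ) * ((2:ℝ)^(k+1))⁻¹) = 2*x + (i:ℝ) * (((2:ℝ)^(k+1))⁻¹ * 2) by ring,
        hps, ih (2*x) (by linarith) h2x i (by omega)]
      split_ifs <;> rw [pow_succ] <;> ring
    · -- right half
      push_neg at hcase
      have hile : i ≤ 2^(k+1) - 1 := hi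
      have h2k1 : (2:ℕ)^(k+1) = 2 * 2^k := by rw [pow_succ]; ring
      have hicast : ((2:ℝ)^k) ≤ (i:ℝ) := by exact_mod_cast hcase
      have hicast2 : (i:ℝ) ≤ 2^(k+1) - 1 := by
        have hp : 1 ≤ 2^(k+1) := Nat.one_le_two_pow
        have hn : i + 1 ≤ 2^(k+1) := by omega
        have : (i:ℝ) + 1 ≤ (2:ℝ)^(k+1) := by exact_mod_cast hn
        linarith
      have ht : (0:ℝ) < ((2:ℝ)^(k+1))⁻¹ := by positivity
      have hhalf : ((2:ℝ)^k) * ((2:ℝ)^(k+1))⁻¹ = 1/2 := by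
        rw [pow_succ]; field_simp
      have hone : ((2:ℝ)^(k+1)) * ((2:ℝ)^(k+1))⁻¹ = 1 := by
        field_simp
      have hy0 : 1/2 ≤ x + (i:ℝ) * ((2:ℝ)^(k+1))⁻¹ := by nlinarith
      have hy1 : x + (i:ℝ) * ((2:ℝ)^(k+1))⁻¹ ≤ 1 := by nlinarith
      rw [tent_high hy0 hy1]
      have hpk : 1 ≤ 2^k := Nat.one_le_two_pow
      obtain ⟨i', hsum⟩ : ∃ i' : ℕ, i' + i + 1 = 2^(k+1) :=
        ⟨2^(k+1) - 1 - i, by omega⟩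
      have hsumcast : (i':ℝ) + (i:ℝ) + 1 = (2:ℝ)^(k+1) := by exact_mod_cast hsum
      have heq : 2 - 2 * (x + (i:ℝ) * ((2:ℝ)^(k+1))⁻¹)
          = (((2:ℝ)^k)⁻¹ - 2*x) + (i':ℝ) * ((2:ℝ)^k)⁻¹ := by
        have h1 : ((2:ℝ)^(k+1))⁻¹ * 2 = ((2:ℝ)^k)⁻¹ := hps
        have h2 : (i':ℝ) = (2:ℝ)^(k+1) - 1 - (i:ℝ) := by linarith
        rw [h2, ← h1]
        linear_combination (-2 : ℝ) * hone
      have hi'le : i' ≤ 2^k - 1 := by omega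
      rw [heq, ih (((2:ℝ)^k)⁻¹ - 2*x) (by linarith) (by linarith) i' hi'le]
      have hpar : Even i' ↔ ¬ Even i := by
        rw [Nat.even_iff, Nat.even_iff]
        omega
      have hinv : ((2:ℝ)^k)⁻¹ * (2:ℝ)^k = 1 := by field_simp
      rcases Nat.even_or_odd i with he | ho
      · rw [if_neg (by simpa [he] using hpar), if_pos he, pow_succ]
        linear_combination (-1 : ℝ) * hinv
      · have hno : ¬ Even i := Nat.not_even_iff_odd.mpr ho
        rw [if_pos (hpar.mpr hno), if_neg hno, pow_succ]
        linear_combination hinv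

/-- Proposition 5.1: pre-composing a symmetric `g : [0,1] → [0,1]` with `f^k`
repeats `g` (horizontally compressed) `2^k` times. -/
theorem symmetric_repetition (k : ℕ) (hk : 1 ≤ k) (g : ℝ → ℝ)
    (hgmap : ∀ z ∈ Set.Icc (0:ℝ) 1, g z ∈ Set.Icc (0:ℝ) 1)
    (hgsym : ∀ z ∈ Set.Icc (0:ℝ) 1, g z = g (1 - z))
    (x : ℝ) (hx : x ∈ Set.Icc (0:ℝ) ((2:ℝ) ^ (-(k:ℤ))))
    (i : ℕ) (hi : i ≤ 2 ^ k - 1)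
    (hmem : x + (i : ℝ) * (2:ℝ) ^ (-(k:ℤ)) ∈ Set.Icc (0:ℝ) 1) :
    g (triangleF^[k] (x + (i : ℝ) * (2:ℝ) ^ (-(k:ℤ)))) = g (x * 2 ^ k) := by
  have hzpow : (2:ℝ) ^ (-(k:ℤ)) = ((2:ℝ)^k)⁻¹ := by
    rw [zpow_neg, zpow_natCast]
  rw [hzpow] at hx ⊢
  rw [tent_key k x hx.1 hx.2 i hi]
  split_ifs with h
  · rfl
  · have h2k : (0:ℝ) < 2^k := by positivity
    have hmem' : x * 2^k ∈ Set.Icc (0:ℝ) 1 := by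
      constructor
      · exact mul_nonneg hx.1 h2k.le
      · have := hx.2
        calc x * 2^k ≤ ((2:ℝ)^k)⁻¹ * 2^k := by nlinarith
          _ = 1 := by field_simp
    exact (hgsym _ hmem').symm
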